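/- arXiv:1202.4597 — 3 statements merged into one kernel-verified Lean document; each statement's English description precedes it below -/
import Mathlib

section
/- Let a and b be integers with 0 < a < b, and let [a₀, a₁, …, aₙ] be the continued fraction expansion of b/a. Then the Sprague–Grundy value of the Euclid position (a,b) is 𝒢_E(a,b) = ⌊b/a⌋ if 𝓘(a,b) is even, and 𝒢_E(a,b) = ⌊b/a⌋ − 1 if 𝓘(a,b) is odd. -/
/-- The minimum excludant of a set of natural numbers: the least nonnegative
integer not belonging to the set. -/
noncomputable def mex (S : Set ℕ) : ℕ := sInf {n : ℕ | n ∉ S}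

/-- `cf a b` is the continued fraction expansion `[a₀, a₁, …, aₙ]` of `b / a`
(for `0 < a`), computed by the Euclidean algorithm; the convention `aₙ > 1`
whenever `n > 0` holds automatically. -/
def cf (a b : ℕ) : List ℕ :=
  if h : a = 0 then [] else (b / a) :: cf (b % a) a
termination_by a
decreasing_by exact Nat.mod_lt _ (Nat.pos_of_ne_zero h)

/-- `𝓘(a,b)`: the largest nonnegative integer `i` such that
`a₀ = a₁ = ⋯ = a_{i−1} ≤ a_i` in the continued fraction `[a₀, …, aₙ]` of `b / a`
(for `i = 0` the condition is vacuous). -/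
def Ifun (a b : ℕ) : ℕ :=
  Nat.findGreatest
    (fun i => i < (cf a b).length ∧ (∀ j < i, (cf a b).getD j 0 = (cf a b).getD 0 0) ∧
      (cf a b).getD 0 0 ≤ (cf a b).getD i 0)
    ((cf a b).length - 1)

/-- Moves in Euclid.  Positions are unordered pairs of nonnegative integers,
represented as sorted pairs `(p.1, p.2)` with `p.1 ≤ p.2`.  From a position with
both entries positive one subtracts a positive multiple of one entry from the
other without making the result negative; positions with a zero entry are
terminal. -/
def euclidMove (p q : ℕ × ℕ) : Prop :=
  0 < p.1 ∧ p.1 ≤ p.2 ∧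
    ∃ k : ℕ, 0 < k ∧ k * p.1 ≤ p.2 ∧
      q = (min p.1 (p.2 - k * p.1), max p.1 (p.2 - k * p.1))

/-- The Sprague–Grundy function of Euclid:
`𝒢_E(p) = mex { 𝒢_E(q) : q an option of p }`. -/
noncomputable def euclidGrundy (p : ℕ × ℕ) : ℕ :=
  mex {g : ℕ | ∃ q : ℕ × ℕ, ∃ _ : euclidMove p q, euclidGrundy q = g}
termination_by p.1 + p.2
decreasing_by
  rename_i hq
  obtain ⟨h1, h2, k, hk, hle, rfl⟩ := hq
  have : p.1 ≤ k * p.1 := Nat.le_mul_of_pos_left p.1 hk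
  simp only [Nat.min_def, Nat.max_def]
  split <;> omega
lemma mex_eq {S : Set ℕ} {n : ℕ} (h1 : n ∉ S) (h2 : ∀ m < n, m ∈ S) : mex S = n := by
  have hn : n ∈ {k : ℕ | k ∉ S} := h1
  refine le_antisymm (Nat.sInf_le hn) ?_
  by_contra h
  push_neg at h
  have hmem := Nat.sInf_mem (⟨n, hn⟩ : Set.Nonempty {k : ℕ | k ∉ S})
  exact hmem (h2 _ h)

lemma grundy_def (p : ℕ × ℕ) :
    euclidGrundy p = mex {g : ℕ | ∃ q : ℕ × ℕ, ∃ _ : euclidMove p q, euclidGrundy q = g} := by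
  rw [euclidGrundy]

lemma grundy_zero (x : ℕ) : euclidGrundy (0, x) = 0 := by
  rw [grundy_def]
  have : {g : ℕ | ∃ q : ℕ × ℕ, ∃ _ : euclidMove (0, x) q, euclidGrundy q = g} = ∅ := by
    ext g; simp only [Set.mem_setOf_eq, Set.mem_empty_iff_false, iff_false]
    rintro ⟨q, ⟨h1, -⟩, -⟩; exact absurd h1 (by simp)
  rw [this]
  exact mex_eq (by simp) (by omega)
lemma cf_eq (a b : ℕ) (h : a ≠ 0) : cf a b = (b / a) :: cf (b % a) a := by
  rw [cf]; simp [h]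

lemma cf_head (a b : ℕ) (h : a ≠ 0) : (cf a b).getD 0 0 = b / a := by
  rw [cf_eq a b h]; rfl

lemma cf_len_pos (a b : ℕ) (h : a ≠ 0) : 0 < (cf a b).length := by
  rw [cf_eq a b h]; simp

lemma Ifun_exact (a b : ℕ) (ha : a ≠ 0) (h : b % a = 0) : Ifun a b = 0 := by
  unfold Ifun
  rw [cf_eq a b ha, h, cf]
  simp

lemma Ifun_gt (a b : ℕ) (ha : a ≠ 0) (hr : b % a ≠ 0) (h : a / (b % a) < b / a) :
    Ifun a b = 0 := by
  unfold Ifun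
  rw [cf_eq a b ha]
  have hc0 : (cf (b % a) a).getD 0 0 = a / (b % a) := cf_head _ _ hr
  have hcl : 0 < (cf (b % a) a).length := cf_len_pos _ _ hr
  apply Nat.findGreatest_eq_zero_iff.mpr
  rintro n hn hn' ⟨h1, h2, h3⟩
  match n, hn with
  | 1, _ =>
    simp only [List.getD_cons_succ, List.getD_cons_zero, hc0] at h3
    omega
  | (n+2), _ =>
    have := h2 1 (by omega)
    simp only [List.getD_cons_succ, List.getD_cons_zero, hc0] at this
    omega

lemma Ifun_lt (a b : ℕ) (ha : a ≠ 0) (hr : b % a ≠ 0) (h : b / a < a / (b % a)) :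
    Ifun a b = 1 := by
  unfold Ifun
  rw [cf_eq a b ha]
  have hc0 : (cf (b % a) a).getD 0 0 = a / (b % a) := cf_head _ _ hr
  have hcl : 0 < (cf (b % a) a).length := cf_len_pos _ _ hr
  apply Nat.findGreatest_eq_iff.mpr
  refine ⟨by simp; omega, fun _ => ⟨by simp; omega, ?_, ?_⟩, ?_⟩
  · intro j hj
    interval_cases j
    rfl
  · simp only [List.getD_cons_succ, List.getD_cons_zero, hc0]
    omega
  · rintro n hn hn' ⟨h1, h2, h3⟩
    match n, hn with
    | (n+2), _ =>
      have := h2 1 (by omega)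
      simp only [List.getD_cons_succ, List.getD_cons_zero, hc0] at this
      omega

lemma Ifun_eq (a b : ℕ) (ha : a ≠ 0) (hr : b % a ≠ 0) (h : b / a = a / (b % a)) :
    Ifun a b = Ifun (b % a) a + 1 := by
  have hc0 : (cf (b % a) a).getD 0 0 = a / (b % a) := cf_head _ _ hr
  have hcl : 0 < (cf (b % a) a).length := cf_len_pos _ _ hr
  have hI0 : Ifun (b % a) a =
    Nat.findGreatest (fun i => i < (cf (b % a) a).length ∧
      (∀ j < i, (cf (b % a) a).getD j 0 = (cf (b % a) a).getD 0 0) ∧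
      (cf (b % a) a).getD 0 0 ≤ (cf (b % a) a).getD i 0)
      ((cf (b % a) a).length - 1) := rfl
  have hI := Nat.findGreatest_eq_iff.mp hI0.symm
  obtain ⟨hF1, hF2, hF3⟩ := hI
  conv_lhs => unfold Ifun
  rw [cf_eq a b ha]
  set c := cf (b % a) a with hc
  set I' := Ifun (b % a) a with hI'
  apply Nat.findGreatest_eq_iff.mpr
  refine ⟨by simp; omega, fun _ => ⟨by simp; omega, ?_, ?_⟩, ?_⟩
  · rintro (_|j) hj
    · rfl
    · simp only [List.getD_cons_succ, List.getD_cons_zero]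
      rcases Nat.eq_zero_or_pos I' with h0 | h0
      · omega
      · have := (hF2 (by omega)).2.1 j (by omega)
        omega
  · simp only [List.getD_cons_succ, List.getD_cons_zero]
    rcases Nat.eq_zero_or_pos I' with h0 | h0
    · rw [h0]; omega
    · have := (hF2 (by omega)).2.2
      omega
  · rintro (_|n) hn hn' ⟨h1, h2, h3⟩
    · omega
    · simp only [List.length_cons] at h1 hn'
      apply hF3 (n := n) (by omega) (by omega)
      refine ⟨by omega, ?_, ?_⟩
      · intro j hj
        have := h2 (j+1) (by omega)
        simp only [List.getD_cons_succ, List.getD_cons_zero] at this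
        omega
      · simp only [List.getD_cons_succ, List.getD_cons_zero] at h3
        omega
def Wv (a b : ℕ) : ℕ := if Even (Ifun a b) then b / a else b / a - 1

lemma Wv_exact (a b : ℕ) (ha : a ≠ 0) (h : b % a = 0) : Wv a b = b / a := by
  rw [Wv, Ifun_exact a b ha h]; simp

lemma Wv_gt (a b : ℕ) (ha : a ≠ 0) (hr : b % a ≠ 0) (h : a / (b % a) < b / a) :
    Wv a b = b / a := by
  rw [Wv, Ifun_gt a b ha hr h]; simp

lemma Wv_lt (a b : ℕ) (ha : a ≠ 0) (hr : b % a ≠ 0) (h : b / a < a / (b % a)) :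
    Wv a b = b / a - 1 := by
  rw [Wv, Ifun_lt a b ha hr h]; simp

lemma Wv_eq (a b : ℕ) (ha : a ≠ 0) (hr : b % a ≠ 0) (h : b / a = a / (b % a)) :
    Wv a b = if Even (Ifun (b % a) a) then b / a - 1 else b / a := by
  rw [Wv, Ifun_eq a b ha hr h]
  by_cases hE : Even (Ifun (b % a) a) <;> simp [Nat.even_add_one, hE]

lemma divmod1 (a m r : ℕ) (ha : 0 < a) (hr : r < a) : (m * a + r) / a = m := by
  rw [add_comm, Nat.add_mul_div_right _ _ ha, Nat.div_eq_of_lt hr, Nat.zero_add]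

lemma divmod2 (a m r : ℕ) (hr : r < a) : (m * a + r) % a = r := by
  rw [add_comm, Nat.add_mul_mod_self_right, Nat.mod_eq_of_lt hr]
lemma key (b : ℕ) : ∀ a, 0 < a → a ≤ b → euclidGrundy (a, b) = Wv a b := by
  induction b using Nat.strong_induction_on with
  | _ b IH =>
  intro a ha hab
  obtain ⟨q, hba⟩ : ∃ q, b / a = q := ⟨_, rfl⟩
  obtain ⟨r, hbm⟩ : ∃ r, b % a = r := ⟨_, rfl⟩
  have hb : q * a + r = b := by rw [← hba, ← hbm, Nat.mul_comm]; exact Nat.div_add_mod b a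
  have hra : r < a := hbm ▸ Nat.mod_lt b ha
  have hq1 : 1 ≤ q := hba ▸ (Nat.one_le_div_iff ha).mpr hab
  have haq : a ≤ q * a := Nat.le_mul_of_pos_left a hq1
  have hsub : ∀ k, 1 ≤ k → k ≤ q → b - k * a = (q - k) * a + r := by
    intro k hk1 hkq
    have h1 : k * a + (q - k) * a = q * a := by
      rw [← Nat.add_mul]; congr 1; omega
    omega
  have hka : ∀ k, k * a ≤ b → k ≤ q := by
    intro k hkb
    by_contra hc
    have h2 : q * a + a ≤ k * a := by
      have := Nat.mul_le_mul_right (k := a) (show q + 1 ≤ k by omega)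
      rw [Nat.add_mul] at this; omega
    omega
  have hset : {g : ℕ | ∃ p : ℕ × ℕ, ∃ _ : euclidMove (a, b) p, euclidGrundy p = g}
      = {g : ℕ | (∃ m, 1 ≤ m ∧ m + 1 ≤ q ∧ g = Wv a (m * a + r)) ∨
          g = (if r = 0 then 0 else Wv r a)} := by
    ext g
    simp only [Set.mem_setOf_eq]
    constructor
    · rintro ⟨p, ⟨-, -, k, hk, hkb, rfl⟩, rfl⟩
      have hkb' : k * a ≤ b := hkb
      have hkq : k ≤ q := hka k hkb'
      rcases Nat.lt_or_ge k q with hlt | hge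
      · left
        have hm1 : 1 ≤ q - k := by omega
        have hsub' : b - k * a = (q - k) * a + r := hsub k (by omega) hkq
        have ham : a ≤ (q - k) * a + r := by
          have : a ≤ (q - k) * a := Nat.le_mul_of_pos_left a hm1
          omega
        have hlt' : (q - k) * a + r < b := by
          have : a ≤ k * a := Nat.le_mul_of_pos_left a hk
          omega
        refine ⟨q - k, hm1, by omega, ?_⟩
        rw [hsub', Nat.min_eq_left ham, Nat.max_eq_right ham]
        exact IH ((q - k) * a + r) hlt' a ha ham
      · right
        have hsub' : b - k * a = r := by
          have hkq' : k = q := by omega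
          rw [hkq']; omega
        rw [hsub', Nat.min_eq_right hra.le, Nat.max_eq_left hra.le]
        rcases Nat.eq_zero_or_pos r with hr0 | hr0
        · rw [if_pos hr0, hr0]; exact grundy_zero a
        · rw [if_neg (by omega)]
          exact IH a (by omega) r hr0 hra.le
    · rintro (⟨m, hm1, hmq, rfl⟩ | rfl)
      · have hkb : (q - m) * a ≤ q * a := Nat.mul_le_mul_right (k := a) (by omega)
        have hsub' : b - (q - m) * a = m * a + r := by
          have := hsub (q - m) (by omega) (by omega)
          simpa [show q - (q - m) = m by omega] using this
        have ham : a ≤ m * a + r := by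
          have : a ≤ m * a := Nat.le_mul_of_pos_left a hm1
          omega
        have hlt' : m * a + r < b := by
          have : a ≤ (q - m) * a := Nat.le_mul_of_pos_left a (by omega)
          omega
        refine ⟨(a, m * a + r), ⟨ha, hab, q - m, by omega, show (q - m) * a ≤ b by omega, ?_⟩, ?_⟩
        · rw [hsub', Nat.min_eq_left ham, Nat.max_eq_right ham]
        · exact IH (m * a + r) hlt' a ha ham
      · refine ⟨(min a (b - q * a), max a (b - q * a)),
          ⟨ha, hab, q, by omega, show q * a ≤ b by omega, rfl⟩, ?_⟩
        have hsub' : b - q * a = r := by omega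
        rw [hsub', Nat.min_eq_right hra.le, Nat.max_eq_left hra.le]
        rcases Nat.eq_zero_or_pos r with hr0 | hr0
        · rw [if_pos hr0, hr0]; exact grundy_zero a
        · rw [if_neg (by omega)]
          exact IH a (by omega) r hr0 hra.le
  rw [grundy_def, hset]
  rcases Nat.eq_zero_or_pos r with hr0 | hr0
  · -- r = 0 case
    have hVm : ∀ m : ℕ, Wv a (m * a + r) = m := by
      intro m
      rw [Wv_exact a _ (by omega) (by rw [divmod2 a m r hra]; omega), divmod1 a m r ha hra]
    have hT : Wv a b = q := by
      rw [Wv_exact a b (by omega) (by rw [hbm]; omega), hba]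
    rw [hT]
    apply mex_eq
    · intro h; simp only [Set.mem_setOf_eq] at h
      rcases h with ⟨m, hm1, hmq, hgm⟩ | hg
      · rw [hVm m] at hgm; omega
      · rw [if_pos hr0] at hg; omega
    · intro x hx; simp only [Set.mem_setOf_eq]
      rcases Nat.eq_zero_or_pos x with hx0 | hx0
      · right; rw [if_pos hr0]; omega
      · left; exact ⟨x, hx0, by omega, (hVm x).symm⟩
  · -- r > 0 case
    have hc01 : 1 ≤ a / r := (Nat.one_le_div_iff hr0).mpr hra.le
    have hVgt : ∀ m : ℕ, a / r < m → Wv a (m * a + r) = m := by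
      intro m hm
      rw [Wv_gt a _ (by omega) (by rw [divmod2 a m r hra]; omega)
        (by rw [divmod1 a m r ha hra, divmod2 a m r hra]; exact hm), divmod1 a m r ha hra]
    have hVlt : ∀ m : ℕ, 1 ≤ m → m < a / r → Wv a (m * a + r) = m - 1 := by
      intro m hm1 hm
      rw [Wv_lt a _ (by omega) (by rw [divmod2 a m r hra]; omega)
        (by rw [divmod1 a m r ha hra, divmod2 a m r hra]; exact hm), divmod1 a m r ha hra]
    have hVeq : Wv a ((a / r) * a + r) = if Even (Ifun r a) then a / r - 1 else a / r := by
      rw [Wv_eq a _ (by omega) (by rw [divmod2 a (a / r) r hra]; omega)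
        (by rw [divmod1 a (a / r) r ha hra, divmod2 a (a / r) r hra]),
        divmod1 a (a / r) r ha hra, divmod2 a (a / r) r hra]
    have hL : (if r = 0 then 0 else Wv r a) = if Even (Ifun r a) then a / r else a / r - 1 := by
      rw [if_neg (by omega), Wv]
    rcases lt_trichotomy (a / r) q with hcase | hcase | hcase
    · -- a/r < q, target q
      have hT : Wv a b = q := by
        rw [Wv_gt a b (by omega) (by rw [hbm]; omega) (by rw [hbm, hba]; exact hcase), hba]
      rw [hT]
      apply mex_eq
      · intro h; simp only [Set.mem_setOf_eq] at h
        rcases h with ⟨m, hm1, hmq, hgm⟩ | hg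
        · rcases lt_trichotomy m (a / r) with h' | h' | h'
          · rw [hVlt m hm1 h'] at hgm; omega
          · rw [h', hVeq] at hgm; split_ifs at hgm <;> omega
          · rw [hVgt m h'] at hgm; omega
        · rw [hL] at hg; split_ifs at hg <;> omega
      · intro x hx; simp only [Set.mem_setOf_eq]
        rcases Nat.lt_or_ge (x + 1) (a / r) with h1 | h1
        · left; exact ⟨x + 1, by omega, by omega, by rw [hVlt (x + 1) (by omega) h1]; omega⟩
        · rcases Nat.lt_or_ge (a / r) x with h2 | h2
          · left; exact ⟨x, by omega, by omega, by rw [hVgt x h2]⟩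
          · rcases Nat.even_or_odd (Ifun r a) with hE | hE
            · by_cases hxe : x = a / r
              · right; rw [hL, if_pos hE]; omega
              · left
                exact ⟨a / r, by omega, by omega, by rw [hVeq, if_pos hE]; omega⟩
            · have hE' : ¬ Even (Ifun r a) := Nat.not_even_iff_odd.mpr hE
              by_cases hxe : x = a / r
              · left; exact ⟨a / r, by omega, by omega, by rw [hVeq, if_neg hE']; omega⟩
              · right; rw [hL, if_neg hE']; omega
    · -- a/r = q
      have hT : Wv a b = if Even (Ifun r a) then q - 1 else q := by
        rw [Wv_eq a b (by omega) (by rw [hbm]; omega) (by rw [hbm, hba]; exact hcase.symm),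
          hbm, hba]
      rcases Nat.even_or_odd (Ifun r a) with hE | hE
      · rw [hT, if_pos hE]
        apply mex_eq
        · intro h; simp only [Set.mem_setOf_eq] at h
          rcases h with ⟨m, hm1, hmq, hgm⟩ | hg
          · rw [hVlt m hm1 (by omega)] at hgm; omega
          · rw [hL, if_pos hE] at hg; omega
        · intro x hx; simp only [Set.mem_setOf_eq]
          left; exact ⟨x + 1, by omega, by omega, by rw [hVlt (x + 1) (by omega) (by omega)]; omega⟩
      · have hE' : ¬ Even (Ifun r a) := Nat.not_even_iff_odd.mpr hE
        rw [hT, if_neg hE']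
        apply mex_eq
        · intro h; simp only [Set.mem_setOf_eq] at h
          rcases h with ⟨m, hm1, hmq, hgm⟩ | hg
          · rw [hVlt m hm1 (by omega)] at hgm; omega
          · rw [hL, if_neg hE'] at hg; omega
        · intro x hx; simp only [Set.mem_setOf_eq]
          by_cases hxq : x = q - 1
          · right; rw [hL, if_neg hE']; omega
          · left; exact ⟨x + 1, by omega, by omega, by rw [hVlt (x + 1) (by omega) (by omega)]; omega⟩
    · -- q < a/r, target q - 1
      have hT : Wv a b = q - 1 := by
        rw [Wv_lt a b (by omega) (by rw [hbm]; omega) (by rw [hbm, hba]; exact hcase), hba]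
      rw [hT]
      apply mex_eq
      · intro h; simp only [Set.mem_setOf_eq] at h
        rcases h with ⟨m, hm1, hmq, hgm⟩ | hg
        · rw [hVlt m hm1 (by omega)] at hgm; omega
        · rw [hL] at hg; split_ifs at hg <;> omega
      · intro x hx; simp only [Set.mem_setOf_eq]
        left; exact ⟨x + 1, by omega, by omega, by rw [hVlt (x + 1) (by omega) (by omega)]; omega⟩
/-- **Theorem (Cole–Davie / Nivasch; Theorem 1 of the paper, Euclid part).**
For `0 < a < b`, the Sprague–Grundy value of the Euclid position `(a, b)` is
`⌊b/a⌋` if `𝓘(a,b)` is even and `⌊b/a⌋ − 1` if `𝓘(a,b)` is odd. -/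
theorem euclidGrundy_eq (a b : ℕ) (ha : 0 < a) (hab : a < b) :
    euclidGrundy (a, b) = if Even (Ifun a b) then b / a else b / a - 1 := by
  have h := key b a ha hab.le
  rwa [Wv] at h
end

section
/- Let a and b be integers with 0 < a < b such that a does not divide b, and let [a₀, a₁, …, aₙ] be the continued fraction expansion of b/a. Then the Sprague–Grundy value of the M-Euclid position {a,b} is 𝒢_M(a,b) = ⌊b/a⌋ if 𝓙(a,b) is even, and 𝒢_M(a,b) = ⌊b/a⌋ − 1 if 𝓙(a,b) is odd. -/
/-- `𝓙(a,b)`: the largest nonnegative integer `j < n` such that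
`a₀ = a₁ = ⋯ = a_{j−1} ≤ a_j` in the continued fraction `[a₀, …, aₙ]` of `b / a`
(for `j = 0` the condition is vacuous). -/
def Jfun (a b : ℕ) : ℕ :=
  Nat.findGreatest
    (fun j => j + 1 < (cf a b).length ∧ (∀ i < j, (cf a b).getD i 0 = (cf a b).getD 0 0) ∧
      (cf a b).getD 0 0 ≤ (cf a b).getD j 0)
    ((cf a b).length - 2)

/-- Moves in M-Euclid.  Positions are unordered pairs of positive integers,
represented as sorted pairs; positions in which one entry is a positive integer
multiple of the other (in particular pairs with equal entries) are terminal;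
from a nonterminal `{a, b}` with `a < b` one may move to `{a, b − k·a}` for any
positive integer `k` with `b − k·a ≥ 1`. -/
def meuclidMove (p q : ℕ × ℕ) : Prop :=
  0 < p.1 ∧ p.1 < p.2 ∧ ¬ p.1 ∣ p.2 ∧
    ∃ k : ℕ, 0 < k ∧ k * p.1 < p.2 ∧
      q = (min p.1 (p.2 - k * p.1), max p.1 (p.2 - k * p.1))

/-- The Sprague–Grundy function of M-Euclid:
`𝒢_M(p) = mex { 𝒢_M(q) : q an option of p }`. -/
noncomputable def meuclidGrundy (p : ℕ × ℕ) : ℕ :=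
  mex {g : ℕ | ∃ q : ℕ × ℕ, ∃ _ : meuclidMove p q, meuclidGrundy q = g}
termination_by p.1 + p.2
decreasing_by
  rename_i hq
  obtain ⟨h1, h2, hnd, k, hk, hle, rfl⟩ := hq
  have : p.1 ≤ k * p.1 := Nat.le_mul_of_pos_left p.1 hk
  simp only [Nat.min_def, Nat.max_def]
  split <;> omega

/-!
Write `b = q * a + r` with `0 < r < a`. The options of `{a, q * a + r}` are `{r, a}` and the lower
rungs `{a, j * a + r}`, `0 < j < q`; by induction on `q` the rungs take every value below `q` except
`𝒢_M(r, a)`, whence `𝒢_M(a, q * a + r) = q - 1` if `q ≤ 𝒢_M(r, a)` and `= q` otherwise.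

The claimed value, read off the continued fraction `[q, a₁, …]` of `b / a`, obeys the same recursion
with respect to the tail `[a₁, …]`, the continued fraction of `a / r`: `𝓙` is `0` when `q > a₁`,
`1` when `q < a₁`, and grows by one when `q = a₁`. Induction along the Euclidean algorithm
concludes.
-/

lemma mex_eq_of_forall_lt_mem {S : Set ℕ} {n : ℕ} (hn : n ∉ S) (hlt : ∀ m < n, m ∈ S) :
    mex S = n :=
  le_antisymm (Nat.sInf_le hn) (le_csInf ⟨n, hn⟩ fun _ hm => not_lt.mp fun h => hm (hlt _ h))

/-- The image is `{0, …, q - 1} \ {g}` if `g < q` and `{0, …, q - 2}` otherwise. -/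
lemma mex_insert_image_Ioo (g : ℕ) {q : ℕ} (hq : 0 < q) :
    mex (insert g ((fun j => if j ≤ g then j - 1 else j) '' Set.Ioo 0 q)) =
      if q ≤ g then q - 1 else q := by
  apply mex_eq_of_forall_lt_mem
  · simp only [Set.mem_insert_iff, Set.mem_image, Set.mem_Ioo, not_or, not_exists, not_and]
    refine ⟨?_, fun j hj => ?_⟩ <;> split_ifs <;> omega
  · intro m hm
    simp only [Set.mem_insert_iff, Set.mem_image, Set.mem_Ioo]
    by_cases hmg : m = g
    · exact .inl hmg
    · by_cases hlt : m < g
      · exact .inr ⟨m + 1, ⟨by omega, by split_ifs at hm <;> omega⟩, by split_ifs <;> omega⟩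
      · exact .inr ⟨m, ⟨by omega, by split_ifs at hm <;> omega⟩, by split_ifs <;> omega⟩

lemma meuclidGrundy_of_dvd {a b : ℕ} (h : a ∣ b) : meuclidGrundy (a, b) = 0 := by
  rw [meuclidGrundy]
  exact mex_eq_of_forall_lt_mem (fun ⟨_, hm, _⟩ => hm.2.2.1 h) fun _ h =>
    absurd h (Nat.not_lt_zero _)

lemma meuclidMove_mul_add_iff {a q r : ℕ} (hr : 0 < r) (hra : r < a) (hq : 0 < q) (p : ℕ × ℕ) :
    meuclidMove (a, q * a + r) p ↔ (∃ j, 0 < j ∧ j < q ∧ p = (a, j * a + r)) ∨ p = (r, a) := by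
  have hnd : ¬ a ∣ q * a + r := fun h =>
    Nat.not_dvd_of_pos_of_lt hr hra ((Nat.dvd_add_right (dvd_mul_left a q)).mp h)
  have haq : a ≤ q * a := Nat.le_mul_of_pos_left a hq
  have hsub (k : ℕ) (hk : k ≤ q) : q * a + r - k * a = (q - k) * a + r := by
    rw [Nat.sub_mul, Nat.sub_add_comm (Nat.mul_le_mul_right a hk)]
  have hpair (j : ℕ) (hj : 0 < j) : (min a (j * a + r), max a (j * a + r)) = (a, j * a + r) := by
    have : a ≤ j * a := Nat.le_mul_of_pos_left a hj
    rw [min_eq_left (by omega), max_eq_right (by omega)]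
  constructor
  · rintro ⟨-, -, -, k, hk, hlt, rfl⟩
    have hkq : k ≤ q := by
      by_contra! h
      nlinarith
    rcases hkq.eq_or_lt with rfl | hkq
    · right
      simp [hra.le]
    · exact .inl ⟨q - k, by omega, by omega, by simp only [hsub k hkq.le, hpair (q - k) (by omega)]⟩
  · rintro (⟨j, hj0, hjq, rfl⟩ | rfl)
    · refine ⟨by omega, by simp only; omega, hnd, q - j, by omega, ?_, ?_⟩
      · have := Nat.mul_le_mul_right a (Nat.sub_le q j)
        simp only; omega
      · simp only [hsub _ (Nat.sub_le q j), Nat.sub_sub_self hjq.le, hpair j hj0]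
    · refine ⟨by omega, by simp only; omega, hnd, q, hq, by simp only; omega, ?_⟩
      simp [hra.le]

lemma meuclidGrundy_mul_add {a q r : ℕ} (hr : 0 < r) (hra : r < a) (hq : 0 < q) :
    meuclidGrundy (a, q * a + r) = if q ≤ meuclidGrundy (r, a) then q - 1 else q := by
  induction q using Nat.strong_induction_on with
  | _ q IH =>
    rw [meuclidGrundy, ← mex_insert_image_Ioo _ hq]
    congr 1
    ext v
    simp only [Set.mem_ofPred_eq, meuclidMove_mul_add_iff hr hra hq, Set.mem_insert_iff,
      Set.mem_image, Set.mem_Ioo]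
    constructor
    · rintro ⟨p, ⟨j, hj0, hjq, rfl⟩ | rfl, rfl⟩
      · exact .inr ⟨j, ⟨hj0, hjq⟩, (IH j hjq hj0).symm⟩
      · exact .inl rfl
    · rintro (rfl | ⟨j, ⟨hj0, hjq⟩, rfl⟩)
      · exact ⟨_, .inr rfl, rfl⟩
      · exact ⟨_, .inl ⟨j, hj0, hjq, rfl⟩, IH j hjq hj0⟩

lemma Nat.findGreatest_add_one_of_succ_iff {P Q : ℕ → Prop} [DecidablePred P] [DecidablePred Q]
    (hPQ : ∀ j, P (j + 1) ↔ Q j) (hQ : Q 0) (n : ℕ) :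
    Nat.findGreatest P (n + 1) = Nat.findGreatest Q n + 1 := by
  induction n with
  | zero => simp [(hPQ 0).mpr hQ]
  | succ n ih =>
    simp only [Nat.findGreatest_succ (n + 1), ih, Nat.findGreatest_succ n, hPQ]
    split_ifs <;> rfl

lemma cf_of_ne_zero {a : ℕ} (b : ℕ) (ha : a ≠ 0) : cf a b = (b / a) :: cf (b % a) a := by
  rw [cf, dif_neg ha]

lemma cf_of_dvd {a b : ℕ} (ha : 0 < a) (h : a ∣ b) : cf a b = [b / a] := by
  rw [cf_of_ne_zero b ha.ne', Nat.mod_eq_zero_of_dvd h, cf, dif_pos rfl]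

def jIndex (l : List ℕ) : ℕ :=
  Nat.findGreatest
    (fun j => j + 1 < l.length ∧ (∀ i < j, l.getD i 0 = l.getD 0 0) ∧ l.getD 0 0 ≤ l.getD j 0)
    (l.length - 2)

lemma Jfun_eq_jIndex (a b : ℕ) : Jfun a b = jIndex (cf a b) := rfl

lemma jIndex_cons_cons_of_lt {q x : ℕ} (t : List ℕ) (h : x < q) : jIndex (q :: x :: t) = 0 := by
  rw [jIndex, Nat.findGreatest_eq_zero_iff]
  rintro (_ | _ | m) hm - ⟨-, hall, hle⟩
  · omega
  · simp only [List.getD_cons_zero, List.getD_cons_succ] at hle; omega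
  · have := hall 1 (by omega)
    simp only [List.getD_cons_zero, List.getD_cons_succ] at this; omega

lemma jIndex_cons_cons_of_gt {q x : ℕ} {t : List ℕ} (ht : t ≠ []) (h : q < x) :
    jIndex (q :: x :: t) = 1 := by
  have ht : 1 ≤ t.length := List.length_pos_iff.mpr ht
  have hlen : (q :: x :: t).length = t.length + 2 := rfl
  rw [jIndex, Nat.findGreatest_eq_iff]
  refine ⟨by omega, fun _ => ⟨by omega, ?_, ?_⟩, ?_⟩
  · intro i hi
    obtain rfl : i = 0 := by omega
    rfl
  · simp only [List.getD_cons_zero, List.getD_cons_succ]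
    omega
  · rintro m hm - ⟨-, hall, -⟩
    have := hall 1 (by omega)
    simp only [List.getD_cons_zero, List.getD_cons_succ] at this; omega

lemma jIndex_cons_self {q : ℕ} {t : List ℕ} (ht : t ≠ []) :
    jIndex (q :: q :: t) = jIndex (q :: t) + 1 := by
  have ht : 1 ≤ t.length := List.length_pos_iff.mpr ht
  have hlen : (q :: t).length = t.length + 1 := rfl
  have hlen' : (q :: q :: t).length = t.length + 2 := rfl
  rw [jIndex, jIndex, show (q :: q :: t).length - 2 = (q :: t).length - 2 + 1 by omega]
  refine Nat.findGreatest_add_one_of_succ_iff (fun j => ?_) ⟨by omega, by simp, le_rfl⟩ _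
  simp only [List.length_cons, List.getD_cons_zero, List.getD_cons_succ]
  refine and_congr (by omega) (and_congr ⟨fun h i hi => ?_, fun h i hi => ?_⟩ Iff.rfl)
  · simpa using h (i + 1) (by omega)
  · rcases i with _ | i
    · rfl
    · simpa using h i (by omega)

def jValue (l : List ℕ) : ℕ := if Even (jIndex l) then l.headD 0 else l.headD 0 - 1

lemma jValue_cf {a : ℕ} (b : ℕ) (ha : 0 < a) :
    jValue (cf a b) = if Even (Jfun a b) then b / a else b / a - 1 := by
  rw [Jfun_eq_jIndex, jValue, cf_of_ne_zero b ha.ne']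
  rfl

lemma jValue_pair (q x : ℕ) : jValue [q, x] = q := rfl

lemma jValue_cons_cons {q x : ℕ} {t : List ℕ} (hq : 0 < q) (ht : t ≠ []) :
    jValue (q :: x :: t) = if q ≤ jValue (x :: t) then q - 1 else q := by
  rcases lt_trichotomy x q with h | rfl | h
  · simp only [jValue, jIndex_cons_cons_of_lt t h, Even.zero, if_true, List.headD_cons]
    split_ifs <;> omega
  · simp only [jValue, jIndex_cons_self ht, Nat.even_add_one, List.headD_cons]
    split_ifs <;> omega
  · simp only [jValue, jIndex_cons_cons_of_gt ht h, Nat.not_even_one, if_false,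
      List.headD_cons]
    split_ifs <;> omega

/-- **Theorem 2 of the paper.**  For `0 < a < b` with `a ∤ b`, the
Sprague–Grundy value of the M-Euclid position `{a, b}` is `⌊b/a⌋` if `𝓙(a,b)`
is even and `⌊b/a⌋ − 1` if `𝓙(a,b)` is odd. -/
theorem meuclidGrundy_eq (a b : ℕ) (ha : 0 < a) (hab : a < b) (hnd : ¬ a ∣ b) :
    meuclidGrundy (a, b) = if Even (Jfun a b) then b / a else b / a - 1 := by
  induction b using Nat.strong_induction_on generalizing a with
  | _ b IH =>
    have hr : 0 < b % a := Nat.pos_of_ne_zero fun h => hnd (Nat.dvd_of_mod_eq_zero h)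
    have hra : b % a < a := Nat.mod_lt b ha
    have hq : 0 < b / a := Nat.div_pos hab.le ha
    have hG := meuclidGrundy_mul_add hr hra hq
    rw [Nat.div_add_mod'] at hG
    rw [hG, ← jValue_cf b ha, cf_of_ne_zero b ha.ne']
    by_cases hdvd : b % a ∣ a
    · rw [meuclidGrundy_of_dvd hdvd, cf_of_dvd hr hdvd, jValue_pair, if_neg (by omega)]
    · have htail : cf (a % (b % a)) (b % a) ≠ [] := by
        rw [cf_of_ne_zero _ fun h => hdvd (Nat.dvd_of_mod_eq_zero h)]
        exact List.cons_ne_nil _ _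
      rw [IH a hab (b % a) hr hra hdvd, ← jValue_cf a hr, cf_of_ne_zero a hr.ne',
        jValue_cons_cons hq htail]
end

section
/- Let a and b be integers with 0 < a < b such that a does not divide b, let [a₀, a₁, …, aₙ] be the continued fraction expansion of b/a, and suppose n ≥ 2. Let r = b − a₀·a (so 0 < r < a, the continued fraction of a/r is [a₁, …, aₙ], and r does not divide a). Then F(r, a) ≠ F(a, b). -/
/-- `F(a,b) = ⌊b/a⌋` if `𝓙(a,b)` is even, and `F(a,b) = ⌊b/a⌋ − 1` if `𝓙(a,b)`
is odd. -/
def F (a b : ℕ) : ℕ := if Even (Jfun a b) then b / a else b / a - 1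

lemma findGreatest_add_one_eq_of_shift {P Q : ℕ → Prop} [DecidablePred P] [DecidablePred Q]
    (hPQ : ∀ j, P (j + 1) ↔ Q j) (hQ : Q 0) (m : ℕ) :
    Nat.findGreatest P (m + 1) = Nat.findGreatest Q m + 1 := by
  induction m with
  | zero => simp [hPQ, hQ]
  | succ m ih =>
    rw [Nat.findGreatest_succ (P := P), ih, Nat.findGreatest_succ (P := Q)]
    by_cases h : Q (m + 1) <;> simp [h, hPQ]

lemma cf_eq_nil_iff {a b : ℕ} : cf a b = [] ↔ a = 0 := by
  rw [cf]; split_ifs with h <;> simp [h]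

lemma cf_eq_cons {a b : ℕ} (ha : a ≠ 0) : cf a b = b / a :: cf (b % a) a := by
  rw [cf, dif_neg ha]

/-- `Jfun a b = jOfList (cf a b)` holds by `rfl`. -/
def jOfList (l : List ℕ) : ℕ :=
  Nat.findGreatest
    (fun j => j + 1 < l.length ∧ (∀ i < j, l.getD i 0 = l.getD 0 0) ∧ l.getD 0 0 ≤ l.getD j 0)
    (l.length - 2)

def fOfList (l : List ℕ) : ℕ := if Even (jOfList l) then l.headD 0 else l.headD 0 - 1

lemma F_eq_fOfList {a b : ℕ} (ha : a ≠ 0) : F a b = fOfList (cf a b) := by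
  have hhead : (cf a b).headD 0 = b / a := by rw [cf_eq_cons ha]; rfl
  rw [F, fOfList, hhead]
  rfl

section jOfList

variable {x y : ℕ} {t : List ℕ}

lemma jOfList_cons_cons_of_lt (h : y < x) : jOfList (x :: y :: t) = 0 := by
  refine Nat.findGreatest_eq_zero_iff.2 fun k hk _ ⟨_, hconst, hle⟩ => ?_
  rcases Nat.lt_or_ge k 2 with hk2 | hk2
  · obtain rfl : k = 1 := by omega
    exact absurd hle (not_le.2 h)
  · exact h.ne (hconst 1 hk2)

lemma jOfList_cons_cons_of_gt (h : x < y) (ht : t ≠ []) : jOfList (x :: y :: t) = 1 := by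
  have ht' : 0 < t.length := List.length_pos_iff.2 ht
  refine Nat.findGreatest_eq_iff.2 ⟨?_, fun _ => ⟨?_, ?_, h.le⟩, ?_⟩
  · simp only [List.length_cons]; omega
  · simp only [List.length_cons]; omega
  · intro i hi
    obtain rfl : i = 0 := by omega
    rfl
  · rintro k hk _ ⟨_, hconst, _⟩
    exact h.ne' (hconst 1 hk)

lemma jOfList_cons_self (ht : t ≠ []) : jOfList (x :: x :: t) = jOfList (x :: t) + 1 := by
  have ht' : 0 < t.length := List.length_pos_iff.2 ht
  have hlen : (x :: x :: t).length - 2 = (x :: t).length - 2 + 1 := by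
    simp only [List.length_cons]; omega
  rw [jOfList, jOfList, hlen]
  refine findGreatest_add_one_eq_of_shift (fun j => ?_) (by simpa using ht') _
  simp only [List.length_cons, List.getD_cons_zero, List.getD_cons_succ, Nat.forall_lt_succ_left,
    true_and, Nat.add_lt_add_iff_right]

end jOfList

lemma fOfList_ne_fOfList_cons {x y : ℕ} {t : List ℕ} (hx : 0 < x) (ht : t ≠ []) :
    fOfList (y :: t) ≠ fOfList (x :: y :: t) := by
  have hle : fOfList (y :: t) ≤ y := by unfold fOfList; split <;> simp
  have hge : y - 1 ≤ fOfList (y :: t) := by unfold fOfList; split <;> simp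
  rcases lt_trichotomy y x with hlt | rfl | hgt
  · have : fOfList (x :: y :: t) = x := by simp [fOfList, jOfList_cons_cons_of_lt hlt]
    omega
  · simp only [fOfList, jOfList_cons_self ht, Nat.even_add_one, List.headD_cons]
    split_ifs <;> omega
  · have : fOfList (x :: y :: t) = x - 1 := by simp [fOfList, jOfList_cons_cons_of_gt hgt ht]
    omega

theorem F_ne_of_remainder_general (a b r : ℕ) (hab : a < b)
    (hn : 3 ≤ (cf a b).length) (hr : r = b - b / a * a) :
    F r a ≠ F a b := by
  have ha : a ≠ 0 := fun h => by simp [cf_eq_nil_iff.2 h] at hn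
  have hcf_ab : cf a b = b / a :: cf r a := by rw [cf_eq_cons ha, hr, Nat.mod_eq_sub_div_mul]
  have hcf_ra_len : 2 ≤ (cf r a).length := by rw [hcf_ab, List.length_cons] at hn; omega
  have hr0 : r ≠ 0 := fun h => by simp [cf_eq_nil_iff.2 h] at hcf_ra_len
  have hcf_ra : cf r a = a / r :: cf (a % r) r := cf_eq_cons hr0
  have htail : cf (a % r) r ≠ [] := by
    rw [← List.length_pos_iff]
    rw [hcf_ra, List.length_cons] at hcf_ra_len
    omega
  rw [F_eq_fOfList hr0, F_eq_fOfList ha, hcf_ab, hcf_ra]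
  exact fOfList_ne_fOfList_cons (Nat.div_pos hab.le (Nat.pos_of_ne_zero ha)) htail

/-- For `0 < a < b` with `a ∤ b`, if the continued fraction expansion
`[a₀, …, aₙ]` of `b/a` has `n ≥ 2`, then with `r = b − a₀·a` one has
`F(r, a) ≠ F(a, b)`. -/
theorem F_ne_of_remainder (a b r : ℕ) (ha : 0 < a) (hab : a < b) (hnd : ¬ a ∣ b)
    (hn : 3 ≤ (cf a b).length) (hr : r = b - b / a * a) :
    F r a ≠ F a b :=
  F_ne_of_remainder_general a b r hab hn hr
end
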